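/- Let n ≥ 1 be a fixed positive integer and let N ≥ 1 be an integer. Then the tail series R̃(n, N) = (1/(4n)) ∑_{k > N, k odd} k^{−1/2} Ã_k(n) U(π√n / k) converges absolutely and satisfies |R̃(n, N)| ≤ M(n, N), where M(n, N) := (1/(4π)) ((N+1)/n)^{3/2} ( (π√n/(N+1)) cosh(π√n/(N+1)) + (2N+1) sinh(π√n/(N+1)) − 2π√n ). -/

import Mathlib

/-- The overpartition function: `p̄(n) = ∑_{k=0}^{n} d(k) * p(n-k)`, where `d(k)` is the
number of partitions of `k` into distinct parts and `p(m)` is the number of partitions. -/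
noncomputable def overpartition (n : ℕ) : ℕ :=
  ∑ k ∈ Finset.range (n + 1),
    (Nat.Partition.distincts k).card * Fintype.card (Nat.Partition (n - k))

/-- The Dedekind sum `s(h,k) = ∑_{r=1}^{k-1} (r/k)(hr/k - ⌊hr/k⌋ - 1/2)`. -/
def dedekindSum (h : ℤ) (k : ℕ) : ℚ :=
  ∑ r ∈ Finset.Icc 1 (k - 1),
    ((r : ℚ) / k) * ((h : ℚ) * r / k - ⌊(h : ℚ) * r / k⌋ - 1 / 2)

/-- `ω(h,k) = e^{π i s(h,k)}`. -/
noncomputable def omegaHK (h : ℤ) (k : ℕ) : ℂ :=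
  Complex.exp (Real.pi * Complex.I * (dedekindSum h k : ℂ))

/-- `Ã_k(n) = ∑_{0 ≤ h < k, gcd(h,k)=1} (ω(h,k)² / ω(2h,k)) e^{-2πinh/k}`. -/
noncomputable def Atilde (k : ℕ) (n : ℤ) : ℂ :=
  ∑ h ∈ Finset.range k,
    if Nat.gcd h k = 1 then
      (omegaHK h k) ^ 2 / omegaHK (2 * h) k *
        Complex.exp (-2 * Real.pi * Complex.I * n * h / k)
    else 0

/-- `U(x) = cosh x - sinh x / x`. -/
noncomputable def Ufun (x : ℝ) : ℝ := Real.cosh x - Real.sinh x / x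

/-- The error bound `M(n,N)`. -/
noncomputable def Mbound (n N : ℕ) : ℝ :=
  (1 / (4 * Real.pi)) * (((N : ℝ) + 1) / n) ^ ((3 : ℝ) / 2) *
    (Real.pi * Real.sqrt n / (N + 1) * Real.cosh (Real.pi * Real.sqrt n / (N + 1)) +
      (2 * N + 1) * Real.sinh (Real.pi * Real.sqrt n / (N + 1)) - 2 * Real.pi * Real.sqrt n)

/-!
Since `|ω(h,k)| = 1` we have `|Ã_k(n)| ≤ k`, so the series is dominated by
`∑_{k > N odd} √k U(b/k)` with `b = π√n`. The expansion
`U(x) = ∑_m (1/(2m+2)! - 1/(2m+3)!) x^(2m+2)` has nonnegative coefficients, which turns this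
into a double series of nonnegative terms. For each `m` the odd tail `∑_{k > N odd} k^(-s)`,
`s = 2m + 3/2`, is at most `(N+1)^(-s) + (N+1)^(1-s) / (2(s-1))` (telescoping against the
tangent-line bound for `t^(1-s)`), and the resulting coefficients are dominated termwise by
those of `√(N+1) (cosh a - 1) + (2N+1) √(N+1) (sinh a / a - 1)`, `a = b/(N+1)`, which is
`4n M(n,N)`.
-/

open Real Finset

lemma norm_omegaHK (h : ℤ) (k : ℕ) : ‖omegaHK h k‖ = 1 := by
  rw [omegaHK, Complex.norm_exp]
  simp

lemma norm_Atilde_le (k : ℕ) (n : ℤ) : ‖Atilde k n‖ ≤ k := by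
  have hterm : ∀ h ∈ range k, ‖if Nat.gcd h k = 1 then
      omegaHK h k ^ 2 / omegaHK (2 * h) k * Complex.exp (-2 * π * Complex.I * n * h / k)
      else 0‖ ≤ 1 := by
    intro h _
    split_ifs
    · rw [norm_mul, norm_div, norm_pow, norm_omegaHK, norm_omegaHK, Complex.norm_exp]
      simp
    · simp
  exact (norm_sum_le _ _).trans ((sum_le_sum hterm).trans (by simp))

lemma Real.hasSum_cosh_sub_one (x : ℝ) :
    HasSum (fun m : ℕ => x ^ (2 * m + 2) / (2 * m + 2).factorial) (cosh x - 1) := by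
  simpa [mul_add] using (hasSum_nat_add_iff' 1).2 (Real.hasSum_cosh x)

lemma Real.hasSum_sinh_div_sub_one {x : ℝ} (hx : x ≠ 0) :
    HasSum (fun m : ℕ => x ^ (2 * m + 2) / (2 * m + 3).factorial) (sinh x / x - 1) := by
  have h := (hasSum_nat_add_iff' 1).2 ((Real.hasSum_sinh x).div_const x)
  rw [show sinh x / x - 1 = sinh x / x - ∑ i ∈ range 1, x ^ (2 * i + 1) / (2 * i + 1).factorial / x
    by simp [hx]]
  refine h.congr_fun fun m => ?_
  rw [show 2 * (m + 1) + 1 = 2 * m + 2 + 1 by ring, pow_succ]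
  field_simp
  ring

noncomputable def uCoeff (p : ℕ) : ℝ := 1 / p.factorial - 1 / (p + 1).factorial

lemma uCoeff_nonneg (p : ℕ) : 0 ≤ uCoeff p :=
  sub_nonneg.2 <| one_div_le_one_div_of_le (by positivity) <| by
    exact_mod_cast Nat.factorial_le p.le_succ

lemma hasSum_Ufun {x : ℝ} (hx : x ≠ 0) :
    HasSum (fun m : ℕ => uCoeff (2 * m + 2) * x ^ (2 * m + 2)) (Ufun x) := by
  rw [show Ufun x = (cosh x - 1) - (sinh x / x - 1) by unfold Ufun; ring]
  refine ((Real.hasSum_cosh_sub_one x).sub (Real.hasSum_sinh_div_sub_one hx)).congr_fun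
    fun m => ?_
  simp only [uCoeff]
  ring

lemma Ufun_nonneg (x : ℝ) : 0 ≤ Ufun x := by
  rcases eq_or_ne x 0 with rfl | hx
  · simp [Ufun]
  · exact (hasSum_Ufun hx).nonneg fun m =>
      mul_nonneg (uCoeff_nonneg _) (Even.pow_nonneg ⟨m + 1, by ring⟩ x)

lemma uCoeff_mul_le {p : ℕ} (hp : 2 ≤ p) {L : ℝ} (hL : 0 ≤ L) :
    uCoeff p * (1 + L / (2 * p - 3)) ≤ 1 / p.factorial + (2 * L - 1) / (p + 1).factorial := by
  have hp' : (2 : ℝ) ≤ p := by exact_mod_cast hp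
  rw [uCoeff, Nat.factorial_succ, Nat.cast_mul, ← sub_nonneg]
  have key : 1 / (p.factorial : ℝ) + (2 * L - 1) / ((p + 1 : ℕ) * p.factorial) -
      (1 / p.factorial - 1 / ((p + 1 : ℕ) * p.factorial)) * (1 + L / (2 * p - 3)) =
      3 * L * (p - 2) / ((p + 1) * p.factorial * (2 * p - 3)) := by
    have : (2 * p - 3 : ℝ) ≠ 0 := by linarith
    push_cast
    field_simp
    ring
  rw [key]
  apply div_nonneg
  · exact mul_nonneg (by positivity) (by linarith)
  · exact mul_nonneg (by positivity) (by linarith)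

/-- Tangent-line bound for the convex function `t ↦ t ^ (1 - s)` at `c + d`, via Bernoulli's
inequality `1 + s (d / c) ≤ (1 + d / c) ^ s`. -/
lemma rpow_neg_add_le {c d s : ℝ} (hc : 0 < c) (hd : 0 < d) (hs : 1 < s) :
    (c + d) ^ (-s) ≤ (c ^ (1 - s) - (c + d) ^ (1 - s)) / (d * (s - 1)) := by
  have hcd : 0 < c + d := by linarith
  set X := (c + d) ^ s
  set Y := c ^ s
  have hX : 0 < X := rpow_pos_of_pos hcd s
  have hY : 0 < Y := rpow_pos_of_pos hc s
  have hB : 1 + s * (d / c) ≤ (1 + d / c) ^ s :=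
    one_add_mul_self_le_rpow_one_add (by linarith [div_pos hd hc]) hs.le
  rw [show 1 + d / c = (c + d) / c by field_simp, div_rpow hcd.le hc.le, le_div_iff₀ hY] at hB
  have hB' : (c + s * d) * Y ≤ c * X := by
    calc (c + s * d) * Y = c * ((1 + s * (d / c)) * Y) := by field_simp
      _ ≤ c * X := mul_le_mul_of_nonneg_left hB hc.le
  rw [rpow_neg hcd.le, rpow_sub hc, rpow_sub hcd, rpow_one, rpow_one,
    le_div_iff₀ (by nlinarith), div_sub_div _ _ hY.ne' hX.ne', le_div_iff₀ (by positivity)]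
  field_simp
  nlinarith

lemma sum_range_rpow_neg_le {c d s : ℝ} (hc : 0 < c) (hd : 0 < d) (hs : 1 < s) (J : ℕ) :
    ∑ j ∈ range J, (c + d * j) ^ (-s) ≤ c ^ (-s) + c ^ (1 - s) / (d * (s - 1)) := by
  set G : ℕ → ℝ := fun j => (c + d * j) ^ (1 - s) / (d * (s - 1))
  have hG : ∀ j, 0 ≤ G j := fun j => div_nonneg (by positivity) (by nlinarith)
  have hstep : ∀ j : ℕ, (c + d * (j + 1 : ℕ)) ^ (-s) ≤ G j - G (j + 1) := fun j => by
    simp only [G, ← sub_div]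
    push_cast
    rw [mul_add, mul_one, ← add_assoc]
    exact rpow_neg_add_le (by positivity) hd hs
  have hG0 : G 0 = c ^ (1 - s) / (d * (s - 1)) := by simp [G]
  cases J with
  | zero => simpa [hG0] using add_nonneg (rpow_pos_of_pos hc (-s)).le (hG 0)
  | succ J =>
    rw [sum_range_succ']
    have := (sum_le_sum fun j _ => hstep j).trans_eq (sum_range_sub' G J)
    simp only [Nat.cast_zero, mul_zero, add_zero]
    linarith [hG J]

lemma summable_and_tsum_odd_gt_rpow_neg_le (N : ℕ) {s : ℝ} (hs : 1 < s) :
    Summable (fun k : ℕ => if Odd k ∧ N < k then (k : ℝ) ^ (-s) else 0) ∧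
      ∑' k : ℕ, (if Odd k ∧ N < k then (k : ℝ) ^ (-s) else 0) ≤
        ((N : ℝ) + 1) ^ (-s) + ((N : ℝ) + 1) ^ (1 - s) / (2 * (s - 1)) := by
  set F : ℕ → ℝ := fun k => if Odd k ∧ N < k then (k : ℝ) ^ (-s) else 0
  -- `K` is the least odd number exceeding `N`; the odd `k > N` are exactly the `K + 2 j`.
  set K : ℕ := N + 1 + N % 2
  have hK : (N : ℝ) + 1 ≤ K := by norm_cast; omega
  have hK0 : (0 : ℝ) < K := by linarith
  set e : ℕ → ℕ := fun j => K + 2 * j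
  have he : Function.Injective e := fun i j hij => by simp only [e] at hij; omega
  have hFe : ∀ j, F (e j) = ((K : ℝ) + 2 * j) ^ (-s) := fun j => by
    have : Odd (e j) ∧ N < e j := by
      simp only [e, K]; exact ⟨Nat.odd_iff.2 (by omega), by omega⟩
    simp only [F, if_pos this, e]
    push_cast
    rfl
  have hF : ∀ k ∉ Set.range e, F k = 0 := fun k hk => by
    refine if_neg fun ⟨hodd, hNk⟩ => hk ⟨(k - K) / 2, ?_⟩
    have := Nat.odd_iff.1 hodd
    simp only [e, K]
    omega
  have hnonneg : ∀ j, 0 ≤ (F ∘ e) j := fun j => by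
    rw [Function.comp_apply, hFe]; positivity
  have hpartial : ∀ J, ∑ j ∈ range J, (F ∘ e) j ≤
      (K : ℝ) ^ (-s) + (K : ℝ) ^ (1 - s) / (2 * (s - 1)) := fun J => by
    simpa only [Function.comp_apply, hFe] using sum_range_rpow_neg_le hK0 two_pos hs J
  have hsum : Summable (F ∘ e) := summable_of_sum_range_le hnonneg hpartial
  refine ⟨(he.summable_iff hF).1 hsum, ?_⟩
  rw [← he.tsum_eq fun k hk => by_contra fun h => hk (hF k h)]
  have hmono : ∀ t : ℝ, t ≤ 0 → (K : ℝ) ^ t ≤ ((N : ℝ) + 1) ^ t := fun t ht =>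
    rpow_le_rpow_of_nonpos (by positivity) hK ht
  calc ∑' j, F (e j) ≤ (K : ℝ) ^ (-s) + (K : ℝ) ^ (1 - s) / (2 * (s - 1)) :=
        Real.tsum_le_of_sum_range_le hnonneg hpartial
    _ ≤ _ := add_le_add (hmono _ (by linarith))
        (div_le_div_of_nonneg_right (hmono _ (by linarith)) (by linarith))

lemma summable_and_tsum_le_of_hasSum_of_nonneg {α β : Type*} {ψ : α → β → ℝ} {g : β → ℝ}
    {t : α → ℝ} {T : ℝ} (hψ : ∀ a b, 0 ≤ ψ a b) (hg : ∀ b, HasSum (fun a => ψ a b) (g b))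
    (hrow : ∀ a, Summable (ψ a)) (hrow_le : ∀ a, ∑' b, ψ a b ≤ t a) (ht : HasSum t T) :
    Summable g ∧ ∑' b, g b ≤ T := by
  have hrows : Summable fun a => ∑' b, ψ a b :=
    .of_nonneg_of_le (fun a => tsum_nonneg (hψ a)) hrow_le ht.summable
  have hψ2 : Summable (Function.uncurry ψ) :=
    (summable_prod_of_nonneg fun p => hψ p.1 p.2).2 ⟨hrow, hrows⟩
  have hg' : g = fun b => ∑' a, ψ a b := funext fun b => (hg b).tsum_eq.symm
  subst hg'
  refine ⟨hψ2.prod_symm.prod, ?_⟩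
  rw [hψ2.tsum_comm]
  exact (hrows.tsum_le_tsum hrow_le ht.summable).trans_eq ht.tsum_eq

lemma sqrt_div_pow_eq_rpow {x : ℝ} (hx : 0 < x) (p : ℕ) :
    √x / x ^ p = x ^ (-((p : ℝ) - 1 / 2)) := by
  rw [sqrt_eq_rpow, ← rpow_natCast, ← rpow_sub hx]
  ring_nf

lemma hasSum_sqrt_mul_Ufun_div {b : ℝ} (hb : b ≠ 0) {x : ℝ} (hx : 0 < x) :
    HasSum (fun m : ℕ => uCoeff (2 * m + 2) * b ^ (2 * m + 2) *
      x ^ (-(((2 * m + 2 : ℕ) : ℝ) - 1 / 2))) (√x * Ufun (b / x)) := by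
  refine ((hasSum_Ufun (div_ne_zero hb hx.ne')).mul_left √x).congr_fun fun m => ?_
  rw [← sqrt_div_pow_eq_rpow hx, div_pow]
  ring

lemma uCoeff_mul_tail_le {p : ℕ} (hp : 2 ≤ p) {L b : ℝ} (hL : 0 < L) (hb : 0 ≤ b) :
    uCoeff p * b ^ p * (L ^ (-((p : ℝ) - 1 / 2)) +
      L ^ (1 - ((p : ℝ) - 1 / 2)) / (2 * ((p : ℝ) - 1 / 2 - 1))) ≤
    √L * ((b / L) ^ p / p.factorial + (2 * L - 1) * ((b / L) ^ p / (p + 1).factorial)) := by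
  have hpow : L ^ (1 - ((p : ℝ) - 1 / 2)) = L * L ^ (-((p : ℝ) - 1 / 2)) := by
    rw [sub_eq_add_neg, rpow_add hL, rpow_one]
  have hbL : 0 ≤ (b / L) ^ p * √L := mul_nonneg (by positivity) (sqrt_nonneg L)
  calc uCoeff p * b ^ p * (L ^ (-((p : ℝ) - 1 / 2)) +
        L ^ (1 - ((p : ℝ) - 1 / 2)) / (2 * ((p : ℝ) - 1 / 2 - 1)))
      = uCoeff p * (1 + L / (2 * p - 3)) * ((b / L) ^ p * √L) := by
        rw [hpow, ← sqrt_div_pow_eq_rpow hL, div_pow]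
        ring
    _ ≤ (1 / p.factorial + (2 * L - 1) / (p + 1).factorial) * ((b / L) ^ p * √L) :=
        mul_le_mul_of_nonneg_right (uCoeff_mul_le hp hL.le) hbL
    _ = _ := by ring

lemma summable_and_tsum_odd_gt_sqrt_mul_Ufun_le {b : ℝ} (hb : 0 < b) (N : ℕ) :
    Summable (fun k : ℕ => if Odd k ∧ N < k then √(k : ℝ) * Ufun (b / k) else 0) ∧
      ∑' k : ℕ, (if Odd k ∧ N < k then √(k : ℝ) * Ufun (b / k) else 0) ≤
        √((N : ℝ) + 1) * (cosh (b / (N + 1)) - 1) + (2 * ((N : ℝ) + 1) - 1) *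
          √((N : ℝ) + 1) * (sinh (b / (N + 1)) / (b / (N + 1)) - 1) := by
  set L : ℝ := N + 1
  have hL : 0 < L := by positivity
  have hs : ∀ m : ℕ, 1 < ((2 * m + 2 : ℕ) : ℝ) - 1 / 2 := fun m => by push_cast; linarith
  have hrow := fun m => summable_and_tsum_odd_gt_rpow_neg_le N (hs m)
  have hcosh := (Real.hasSum_cosh_sub_one (b / L)).mul_left √L
  have hsinh := (Real.hasSum_sinh_div_sub_one (div_pos hb hL).ne').mul_left ((2 * L - 1) * √L)
  refine summable_and_tsum_le_of_hasSum_of_nonneg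
    (ψ := fun m k => uCoeff (2 * m + 2) * b ^ (2 * m + 2) *
      if Odd k ∧ N < k then (k : ℝ) ^ (-(((2 * m + 2 : ℕ) : ℝ) - 1 / 2)) else 0)
    (t := fun m => √L * ((b / L) ^ (2 * m + 2) / (2 * m + 2).factorial +
      (2 * L - 1) * ((b / L) ^ (2 * m + 2) / (2 * m + 2 + 1).factorial)))
    (fun m k => ?_) (fun k => ?_) (fun m => (hrow m).1.mul_left _) (fun m => ?_)
    ((hcosh.add hsinh).congr_fun fun m => by ring)
  · exact mul_nonneg (mul_nonneg (uCoeff_nonneg _) (by positivity)) (by split_ifs <;> positivity)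
  · by_cases hk : Odd k ∧ N < k
    · simp only [if_pos hk]
      exact hasSum_sqrt_mul_Ufun_div hb.ne' (by exact_mod_cast hk.1.pos)
    · simpa only [if_neg hk, mul_zero] using hasSum_zero
  · rw [tsum_mul_left]
    have hcoeff : 0 ≤ uCoeff (2 * m + 2) * b ^ (2 * m + 2) :=
      mul_nonneg (uCoeff_nonneg _) (by positivity)
    exact (mul_le_mul_of_nonneg_left (hrow m).2 hcoeff).trans
      (uCoeff_mul_tail_le (by omega) hL hb.le)

lemma Mbound_eq {n : ℕ} (hn : 0 < n) (N : ℕ) :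
    Mbound n N = 1 / (4 * n) * (√((N : ℝ) + 1) * (cosh (π * √n / (N + 1)) - 1) +
      (2 * ((N : ℝ) + 1) - 1) * √((N : ℝ) + 1) *
        (sinh (π * √n / (N + 1)) / (π * √n / (N + 1)) - 1)) := by
  have hn' : (0 : ℝ) < n := by exact_mod_cast hn
  have hL : (0 : ℝ) < N + 1 := by positivity
  have h32 : (((N : ℝ) + 1) / n) ^ ((3 : ℝ) / 2) = (N + 1) * √(N + 1) / (n * √n) := by
    rw [div_rpow hL.le hn'.le, show (3 : ℝ) / 2 = 1 + 1 / 2 by norm_num, rpow_add hL,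
      rpow_add hn', rpow_one, rpow_one, ← sqrt_eq_rpow, ← sqrt_eq_rpow]
  have : √(n : ℝ) ≠ 0 := by positivity
  rw [Mbound, h32]
  field_simp
  ring

lemma norm_Atilde_term_le (k : ℕ) (n : ℤ) (x : ℝ) :
    ‖(1 / (√k : ℂ)) * Atilde k n * (Ufun x : ℂ)‖ ≤ √k * Ufun x := by
  rw [norm_mul, norm_mul, norm_div, norm_one, Complex.norm_real, Complex.norm_real,
    norm_of_nonneg (sqrt_nonneg _), norm_of_nonneg (Ufun_nonneg x)]
  calc 1 / √k * ‖Atilde k n‖ * Ufun x ≤ 1 / √k * k * Ufun x := by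
        gcongr
        · exact Ufun_nonneg x
        · exact norm_Atilde_le k n
    _ = √k * Ufun x := by rw [one_div_mul_eq_div, div_sqrt]

theorem tail_abs_bound_general (n N : ℕ) (hn : 1 ≤ n) :
    Summable (fun k : ℕ =>
      ‖if Odd k ∧ N < k then
          (1 / (Real.sqrt k : ℂ)) * Atilde k n * ((Ufun (Real.pi * Real.sqrt n / k)) : ℂ)
        else 0‖) ∧
    ‖(1 / (4 * (n : ℂ))) * ∑' k : ℕ,
        if Odd k ∧ N < k then
          (1 / (Real.sqrt k : ℂ)) * Atilde k n * ((Ufun (Real.pi * Real.sqrt n / k)) : ℂ)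
        else 0‖ ≤ Mbound n N := by
  have hb : 0 < π * √n := by positivity
  obtain ⟨hsum, htsum⟩ := summable_and_tsum_odd_gt_sqrt_mul_Ufun_le hb N
  set f : ℕ → ℂ := fun k => if Odd k ∧ N < k then
    (1 / (√k : ℂ)) * Atilde k n * ((Ufun (π * √n / k)) : ℂ) else 0
  have hf : ∀ k, ‖f k‖ ≤ if Odd k ∧ N < k then √(k : ℝ) * Ufun (π * √n / k) else 0 := by
    intro k
    simp only [f]
    split_ifs
    · exact norm_Atilde_term_le k n _
    · simp
  have hfs : Summable (‖f ·‖) := hsum.of_nonneg_of_le (fun _ => norm_nonneg _) hf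
  refine ⟨hfs, ?_⟩
  have hn4 : ‖1 / (4 * (n : ℂ))‖ = 1 / (4 * n) := by
    rw [norm_div, norm_one, norm_mul, Complex.norm_natCast, Complex.norm_ofNat]
  rw [Mbound_eq hn, norm_mul, hn4]
  gcongr
  calc ‖∑' k, f k‖ ≤ ∑' k, ‖f k‖ := norm_tsum_le_tsum_norm hfs
    _ ≤ _ := hfs.tsum_le_tsum hf hsum
    _ ≤ _ := htsum

/-- The tail series `R̃(n,N) = (1/(4n)) ∑_{k > N, k odd} k^{-1/2} Ã_k(n) U(π√n/k)` converges
absolutely and satisfies `|R̃(n,N)| ≤ M(n,N)`. -/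
theorem tail_abs_bound (n N : ℕ) (hn : 1 ≤ n) (hN : 1 ≤ N) :
    Summable (fun k : ℕ =>
      ‖if Odd k ∧ N < k then
          (1 / (Real.sqrt k : ℂ)) * Atilde k n * ((Ufun (Real.pi * Real.sqrt n / k)) : ℂ)
        else 0‖) ∧
    ‖(1 / (4 * (n : ℂ))) * ∑' k : ℕ,
        if Odd k ∧ N < k then
          (1 / (Real.sqrt k : ℂ)) * Atilde k n * ((Ufun (Real.pi * Real.sqrt n / k)) : ℂ)
        else 0‖ ≤ Mbound n N :=
  tail_abs_bound_general n N hn
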